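/- Under the assumptions that A is real symmetric with A𝟏=0, Ax = e_R − e_L, and the central block Ā invertible, the matrix A⁺ = (I − 𝟏𝟏ᵀ/(n+1)) G₂ (I − 𝟏𝟏ᵀ/(n+1)) + (x − 𝟏/2)(x − 𝟏/2)ᵀ is the Moore–Penrose pseudoinverse of A, i.e., it satisfies AA⁺A = A, A⁺AA⁺ = A⁺, (AA⁺)ᵀ = AA⁺ and (A⁺A)ᵀ = A⁺A. -/

import Mathlib

open Matrix

noncomputable section

def onesVec (n : ℕ) : Fin (n+1) → ℝ := fun _ => 1

def gridVec (n : ℕ) : Fin (n+1) → ℝ := fun i => (i : ℝ) / n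

def eL (n : ℕ) : Fin (n+1) → ℝ := fun i => if i.1 = 0 then 1 else 0

def eR (n : ℕ) : Fin (n+1) → ℝ := fun i => if i.1 = n then 1 else 0

def interiorEmb (n : ℕ) : Fin (n-1) → Fin (n+1) :=
  fun i => ⟨i.1 + 1, by have := i.isLt; omega⟩

def centralBlock (n : ℕ) (A : Matrix (Fin (n+1)) (Fin (n+1)) ℝ) :
    Matrix (Fin (n-1)) (Fin (n-1)) ℝ :=
  A.submatrix (interiorEmb n) (interiorEmb n)

def pad (n : ℕ) (B : Matrix (Fin (n-1)) (Fin (n-1)) ℝ) :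
    Matrix (Fin (n+1)) (Fin (n+1)) ℝ :=
  fun i j =>
    if hi : 0 < i.1 ∧ i.1 < n then
      if hj : 0 < j.1 ∧ j.1 < n then
        B ⟨i.1 - 1, by omega⟩ ⟨j.1 - 1, by omega⟩
      else 0
    else 0

def G2 (n : ℕ) (A : Matrix (Fin (n+1)) (Fin (n+1)) ℝ) :
    Matrix (Fin (n+1)) (Fin (n+1)) ℝ :=
  pad n (centralBlock n A)⁻¹

def Aplus (n : ℕ) (A : Matrix (Fin (n+1)) (Fin (n+1)) ℝ) :
    Matrix (Fin (n+1)) (Fin (n+1)) ℝ :=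
  (1 - ((n : ℝ) + 1)⁻¹ • vecMulVec (onesVec n) (onesVec n)) * G2 n A *
      (1 - ((n : ℝ) + 1)⁻¹ • vecMulVec (onesVec n) (onesVec n)) +
    vecMulVec (gridVec n - (1/2 : ℝ) • onesVec n)
      (gridVec n - (1/2 : ℝ) • onesVec n)
/-!
Let `P = I - 𝟏𝟏ᵀ/(n+1)` be the orthogonal projection onto `𝟏ᗮ` and `v = x - 𝟏/2`, so that
`P x = v`. With `E` the inclusion of the interior coordinates, `G₂ = E Ā⁻¹ Eᵀ` and `Ā = Eᵀ A E`.
Let `Z w` be the linear interpolant of the boundary values of `w`. Then `Eᵀ A Z = 0`, since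
`A 𝟏 = 0` and `A x = e_R - e_L` vanish at interior nodes, and `I - Z` has zero boundary rows;
together these give `G₂ A = I - Z`. As `P Z = v (e_R - e_L)ᵀ = v vᵀ A`, it follows that
`A⁺ A = P`. The Penrose equations then follow from the symmetry of `A` and `A⁺`, together with
`A P = A` and `P A⁺ = A⁺`.
-/

theorem Matrix.IsSymm.mul_mul_transpose {m n α : Type*} [Fintype m] [CommSemiring α]
    {B : Matrix m m α} (hB : B.IsSymm) (E : Matrix n m α) : (E * B * Eᵀ).IsSymm := by
  rw [IsSymm, transpose_mul, transpose_mul, transpose_transpose, hB.eq, Matrix.mul_assoc]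

theorem penrose_conditions_of_mul_eq {ι R : Type*} [Fintype ι] [CommRing R]
    {A B P : Matrix ι ι R} (hA : A.IsSymm) (hB : B.IsSymm) (hP : P.IsSymm)
    (hBA : B * A = P) (hAP : A * P = A) (hPB : P * B = B) :
    A * B * A = A ∧ B * A * B = B ∧ (A * B)ᵀ = A * B ∧ (B * A)ᵀ = B * A := by
  have hAB : A * B = P := by rw [← hA.eq, ← hB.eq, ← transpose_mul, hBA, hP.eq]
  exact ⟨by rw [Matrix.mul_assoc, hBA, hAP], by rw [hBA, hPB], by rw [hAB, hP.eq],
    by rw [hBA, hP.eq]⟩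

theorem mul_nonsing_inv_mul_mul_eq {ι κ R : Type*} [Fintype ι] [Fintype κ] [DecidableEq κ]
    [CommRing R] (E : Matrix ι κ R) (F : Matrix κ ι R) {A Y : Matrix ι ι R}
    (hA : IsUnit (F * A * E).det) (hY : F * A * Y = F * A) (hEF : E * F * Y = Y) :
    E * (F * A * E)⁻¹ * F * A = Y :=
  calc E * (F * A * E)⁻¹ * F * A = E * (F * A * E)⁻¹ * (F * A * (E * F * Y)) := by
        rw [hEF, hY, Matrix.mul_assoc (E * _)]
    _ = E * ((F * A * E)⁻¹ * (F * A * E)) * F * Y := by simp only [Matrix.mul_assoc]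
    _ = Y := by rw [nonsing_inv_mul _ hA, Matrix.mul_one, hEF]

section Grid

variable {n : ℕ}

def interiorInclusion (n : ℕ) : Matrix (Fin (n+1)) (Fin (n-1)) ℝ :=
  (1 : Matrix (Fin (n+1)) (Fin (n+1)) ℝ).submatrix id (interiorEmb n)

lemma interiorEmb_pred {i : Fin (n+1)} (hi : 0 < i.1 ∧ i.1 < n) :
    interiorEmb n ⟨i.1 - 1, by omega⟩ = i :=
  Fin.ext (Nat.sub_add_cancel hi.1)

lemma interiorEmb_injective : Function.Injective (interiorEmb n) :=
  fun _ _ h => Fin.ext (by simpa [interiorEmb] using h)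

lemma interiorInclusion_mul_apply {α : Type*} (X : Matrix (Fin (n-1)) α ℝ) (i : Fin (n+1))
    (j : α) : (interiorInclusion n * X) i j =
      if hi : 0 < i.1 ∧ i.1 < n then X ⟨i.1 - 1, by omega⟩ j else 0 := by
  split_ifs with hi
  · conv_lhs => rw [← interiorEmb_pred hi]
    simp [interiorInclusion, mul_apply, one_apply, interiorEmb_injective.eq_iff]
  · refine (mul_apply ..).trans (Finset.sum_eq_zero fun k _ => ?_)
    have : i ≠ interiorEmb n k := by
      rintro rfl
      exact hi ⟨Nat.succ_pos _, by simp only [interiorEmb]; omega⟩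
    simp [interiorInclusion, one_apply, this]

lemma transpose_interiorInclusion_mul {α : Type*} (Y : Matrix (Fin (n+1)) α ℝ) :
    (interiorInclusion n)ᵀ * Y = Y.submatrix (interiorEmb n) id := by
  ext k j
  simp [interiorInclusion, mul_apply, one_apply]

lemma transpose_interiorInclusion_mulVec (w : Fin (n+1) → ℝ) :
    (interiorInclusion n)ᵀ *ᵥ w = w ∘ interiorEmb n := by
  ext k
  simp [interiorInclusion, mulVec, dotProduct, one_apply]

lemma mul_interiorInclusion {α : Type*} [Fintype α] (X : Matrix α (Fin (n+1)) ℝ) :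
    X * interiorInclusion n = X.submatrix id (interiorEmb n) := by
  ext i k
  simp [interiorInclusion, mul_apply, one_apply]

lemma interiorInclusion_mul_transpose_mul {α : Type*} {Y : Matrix (Fin (n+1)) α ℝ}
    (hY : ∀ i j, ¬(0 < i.1 ∧ i.1 < n) → Y i j = 0) :
    interiorInclusion n * (interiorInclusion n)ᵀ * Y = Y := by
  ext i j
  rw [Matrix.mul_assoc, interiorInclusion_mul_apply, transpose_interiorInclusion_mul]
  split_ifs with hi
  · simp [interiorEmb_pred hi]
  · exact (hY i j hi).symm

lemma transpose_interiorInclusion_mulVec_eR_sub_eL :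
    (interiorInclusion n)ᵀ *ᵥ (eR n - eL n) = 0 := by
  ext k
  simp only [transpose_interiorInclusion_mulVec, Function.comp_apply, interiorEmb, Pi.sub_apply,
    eR, eL, Pi.zero_apply]
  rw [if_neg (by omega), if_neg (by omega), sub_zero]

lemma centralBlock_eq (A : Matrix (Fin (n+1)) (Fin (n+1)) ℝ) :
    centralBlock n A = (interiorInclusion n)ᵀ * A * interiorInclusion n := by
  rw [transpose_interiorInclusion_mul, mul_interiorInclusion]
  rfl

lemma pad_eq (B : Matrix (Fin (n-1)) (Fin (n-1)) ℝ) :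
    pad n B = interiorInclusion n * B * (interiorInclusion n)ᵀ := by
  ext i j
  rw [Matrix.mul_assoc, interiorInclusion_mul_apply, ← transpose_transpose (B * _),
    transpose_mul, transpose_transpose]
  simp only [transpose_apply, interiorInclusion_mul_apply]
  rfl

lemma G2_eq (A : Matrix (Fin (n+1)) (Fin (n+1)) ℝ) :
    G2 n A = interiorInclusion n *
      ((interiorInclusion n)ᵀ * A * interiorInclusion n)⁻¹ * (interiorInclusion n)ᵀ := by
  rw [G2, pad_eq, centralBlock_eq]

lemma G2_isSymm {A : Matrix (Fin (n+1)) (Fin (n+1)) ℝ} (hA : A.IsSymm) : (G2 n A).IsSymm := by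
  rw [G2, pad_eq]
  exact (hA.submatrix (interiorEmb n)).inv.mul_mul_transpose _

lemma gridVec_zero : gridVec n 0 = 0 := by simp [gridVec]

lemma gridVec_last (hn : n ≠ 0) : gridVec n (Fin.last n) = 1 := by
  simp [gridVec, hn]

lemma onesVec_dotProduct_gridVec (hn : n ≠ 0) :
    onesVec n ⬝ᵥ gridVec n = ((n : ℝ) + 1) / 2 := by
  have h : (∑ i ∈ Finset.range (n+1), (i : ℝ)) * 2 = (n + 1) * n := by
    rw [← Nat.cast_sum]
    exact_mod_cast Nat.add_sub_cancel n 1 ▸ Finset.sum_range_id_mul_two (n+1)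
  simp only [dotProduct, onesVec, one_mul, gridVec, ← Finset.sum_div,
    Fin.sum_univ_eq_sum_range (fun i => (i : ℝ))]
  field_simp
  linarith

def boundaryInterpolant (n : ℕ) : Matrix (Fin (n+1)) (Fin (n+1)) ℝ :=
  vecMulVec (onesVec n - gridVec n) (eL n) + vecMulVec (gridVec n) (eR n)

lemma one_sub_boundaryInterpolant_apply (hn : n ≠ 0) {i : Fin (n+1)}
    (hi : ¬(0 < i.1 ∧ i.1 < n)) (j : Fin (n+1)) : (1 - boundaryInterpolant n) i j = 0 := by
  obtain rfl | rfl : i = 0 ∨ i = Fin.last n := by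
    rw [Fin.ext_iff, Fin.ext_iff]
    have := i.isLt
    simp only [Fin.val_zero, Fin.val_last]
    omega
  all_goals
    rw [Matrix.sub_apply, boundaryInterpolant, Matrix.add_apply, vecMulVec_apply,
      vecMulVec_apply, one_apply]
  · simp only [Pi.sub_apply, onesVec, gridVec_zero, eL, Fin.ext_iff, Fin.val_zero]
    split_ifs <;> first | omega | ring
  · simp only [Pi.sub_apply, onesVec, gridVec_last hn, eR, eL, Fin.ext_iff, Fin.val_last]
    split_ifs <;> first | omega | ring

lemma transpose_interiorInclusion_mul_mul_boundaryInterpolant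
    {A : Matrix (Fin (n+1)) (Fin (n+1)) ℝ} (h1 : A *ᵥ onesVec n = 0)
    (hx : A *ᵥ gridVec n = eR n - eL n) :
    (interiorInclusion n)ᵀ * A * boundaryInterpolant n = 0 := by
  rw [Matrix.mul_assoc, boundaryInterpolant, Matrix.mul_add, mul_vecMulVec, mul_vecMulVec,
    Matrix.mul_add, mul_vecMulVec, mul_vecMulVec, mulVec_sub, h1, hx, zero_sub, mulVec_neg,
    transpose_interiorInclusion_mulVec_eR_sub_eL, neg_zero, zero_vecMulVec, zero_vecMulVec,
    add_zero]

theorem G2_mul (hn : n ≠ 0) {A : Matrix (Fin (n+1)) (Fin (n+1)) ℝ}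
    (h1 : A *ᵥ onesVec n = 0) (hx : A *ᵥ gridVec n = eR n - eL n)
    (hinv : IsUnit (centralBlock n A).det) :
    G2 n A * A = 1 - boundaryInterpolant n := by
  rw [centralBlock_eq] at hinv
  rw [G2_eq]
  refine mul_nonsing_inv_mul_mul_eq _ _ hinv ?_ ?_
  · rw [Matrix.mul_sub, Matrix.mul_one,
      transpose_interiorInclusion_mul_mul_boundaryInterpolant h1 hx, sub_zero]
  · exact interiorInclusion_mul_transpose_mul fun i j hi =>
      one_sub_boundaryInterpolant_apply hn hi j

def centering (n : ℕ) : Matrix (Fin (n+1)) (Fin (n+1)) ℝ :=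
  1 - ((n : ℝ) + 1)⁻¹ • vecMulVec (onesVec n) (onesVec n)

def centeredGrid (n : ℕ) : Fin (n+1) → ℝ := gridVec n - (1/2 : ℝ) • onesVec n

lemma Aplus_eq (A : Matrix (Fin (n+1)) (Fin (n+1)) ℝ) :
    Aplus n A = centering n * G2 n A * centering n +
      vecMulVec (centeredGrid n) (centeredGrid n) := rfl

lemma centering_isSymm : (centering n).IsSymm :=
  isSymm_one.sub (IsSymm.smul (transpose_vecMulVec _ _) _)

lemma centering_mulVec (w : Fin (n+1) → ℝ) :
    centering n *ᵥ w = w - (((n : ℝ) + 1)⁻¹ * (onesVec n ⬝ᵥ w)) • onesVec n := by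
  ext i
  simp [centering, sub_mulVec, smul_mulVec, vecMulVec_mulVec, onesVec]

lemma centering_mulVec_onesVec : centering n *ᵥ onesVec n = 0 := by
  have h : onesVec n ⬝ᵥ onesVec n = (n : ℝ) + 1 := by simp [dotProduct, onesVec]
  rw [centering_mulVec, h, inv_mul_cancel₀ (by positivity), one_smul, sub_self]

lemma centering_mulVec_gridVec (hn : n ≠ 0) : centering n *ᵥ gridVec n = centeredGrid n := by
  rw [centering_mulVec, onesVec_dotProduct_gridVec hn, centeredGrid]
  congr 2
  field_simp

lemma centering_mul {M : Matrix (Fin (n+1)) (Fin (n+1)) ℝ} (hM : onesVec n ᵥ* M = 0) :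
    centering n * M = M := by
  rw [centering, Matrix.sub_mul, Matrix.one_mul, Matrix.smul_mul, vecMulVec_mul, hM,
    vecMulVec_zero, smul_zero, sub_zero]

lemma mul_centering {M : Matrix (Fin (n+1)) (Fin (n+1)) ℝ} (hM : M *ᵥ onesVec n = 0) :
    M * centering n = M := by
  rw [centering, Matrix.mul_sub, Matrix.mul_one, Matrix.mul_smul, mul_vecMulVec, hM,
    zero_vecMulVec, smul_zero, sub_zero]

lemma centering_mul_centering : centering n * centering n = centering n :=
  centering_mul <| by rw [← mulVec_transpose, centering_isSymm.eq, centering_mulVec_onesVec]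

end Grid

section Aplus

variable {n : ℕ} {A : Matrix (Fin (n+1)) (Fin (n+1)) ℝ}

lemma Aplus_isSymm (hA : A.IsSymm) : (Aplus n A).IsSymm := by
  have hPGP := (G2_isSymm hA).mul_mul_transpose (centering n)
  rw [centering_isSymm.eq] at hPGP
  exact hPGP.add (transpose_vecMulVec _ _)

lemma centering_mul_Aplus (hn : n ≠ 0) : centering n * Aplus n A = Aplus n A := by
  have hv : centering n *ᵥ centeredGrid n = centeredGrid n := by
    rw [← centering_mulVec_gridVec hn, mulVec_mulVec, centering_mul_centering]
  rw [Aplus_eq, Matrix.mul_add, ← Matrix.mul_assoc, ← Matrix.mul_assoc, centering_mul_centering,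
    mul_vecMulVec, hv]

theorem Aplus_mul (hn : n ≠ 0) (hA : A.IsSymm) (h1 : A *ᵥ onesVec n = 0)
    (hx : A *ᵥ gridVec n = eR n - eL n) (hinv : IsUnit (centralBlock n A).det) :
    Aplus n A * A = centering n := by
  have hPA : centering n * A = A := centering_mul (by rw [← mulVec_transpose, hA.eq, h1])
  have hvA : centeredGrid n ᵥ* A = eR n - eL n := by
    rw [← mulVec_transpose, hA.eq, centeredGrid, mulVec_sub, mulVec_smul, hx, h1, smul_zero,
      sub_zero]
  have hPZ : centering n * boundaryInterpolant n = vecMulVec (centeredGrid n) (eR n - eL n) := by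
    rw [boundaryInterpolant, Matrix.mul_add, mul_vecMulVec, mul_vecMulVec, mulVec_sub,
      centering_mulVec_onesVec, centering_mulVec_gridVec hn, zero_sub, neg_vecMulVec,
      vecMulVec_sub]
    abel
  calc Aplus n A * A = centering n * (G2 n A * (centering n * A)) +
        vecMulVec (centeredGrid n) (centeredGrid n ᵥ* A) := by
        rw [Aplus_eq, Matrix.add_mul, vecMulVec_mul]
        simp only [Matrix.mul_assoc]
    _ = centering n := by
        rw [hPA, G2_mul hn h1 hx hinv, hvA, Matrix.mul_sub, Matrix.mul_one, hPZ, sub_add_cancel]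

end Aplus

theorem Aplus_is_moore_penrose
    (n : ℕ) (hn : 2 ≤ n) (A : Matrix (Fin (n+1)) (Fin (n+1)) ℝ)
    (hsym : A.IsSymm)
    (h1 : A *ᵥ onesVec n = 0)
    (hx : A *ᵥ gridVec n = eR n - eL n)
    (hinv : IsUnit (centralBlock n A).det) :
    A * Aplus n A * A = A ∧
    Aplus n A * A * Aplus n A = Aplus n A ∧
    (A * Aplus n A)ᵀ = A * Aplus n A ∧
    (Aplus n A * A)ᵀ = Aplus n A * A := by
  have hn0 : n ≠ 0 := by omega
  exact penrose_conditions_of_mul_eq hsym (Aplus_isSymm hsym) centering_isSymm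
    (Aplus_mul hn0 hsym h1 hx hinv) (mul_centering h1) (centering_mul_Aplus hn0)
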